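/- In the super-critical regime a_n^α = n^γ log n with γ > 2, the probability that the clique consists of exactly one vertex connected to at least one follower (i.e. exactly one X_i exceeds √a_n and it forms at least one edge) is asymptotically (γ/2 − 1) n^{2−γ}. -/

import Mathlib

open MeasureTheory Filter Real Set

noncomputable def paretoMeasure (α : ℝ) : Measure ℝ :=
  MeasureTheory.volume.withDensity
    (fun x => ENNReal.ofReal (if 1 ≤ x then α * x ^ (-α - 1) else 0))

noncomputable def aSeq (α γ : ℝ) (n : ℕ) : ℝ := ((n : ℝ) ^ γ * Real.log n) ^ (1/α)

open scoped Topology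

/-!
By exchangeability the probability is `n` times that of the event where vertex `0` is the sole
leader, and given `X₀ = x > s := √aₙ` the other `n - 1` values must all lie below `s` but not all
below `aₙ / x`. For Pareto variables the substitution `u = (x / aₙ) ^ α` turns this into
`n (n - 1) ε² K(ε, n - 2)` with `ε = s ^ (-α) = (n ^ γ log n) ^ (-1/2)` and
`K(ε, p) = ∫ u in ε..1, (1 - u) ^ p / u`. Since `(1 - u) ^ p` is close to `1` for `u ≪ 1 / p` and
negligible for `u ≫ 1 / p`, `K(ε, p) ≈ log (1 / (p ε)) ∼ (γ / 2 - 1) log n`, while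
`n² ε² = n ^ (2 - γ) / log n`.
-/

section Pareto

variable {α a c x : ℝ}

lemma paretoMeasure_eq_paretoMeasure_one (α : ℝ) :
    paretoMeasure α = ProbabilityTheory.paretoMeasure 1 α := by
  unfold paretoMeasure ProbabilityTheory.paretoMeasure
  congr 1
  funext x
  rw [ProbabilityTheory.paretoPDF_eq, one_rpow]
  ring_nf

lemma isProbabilityMeasure_paretoMeasure (hα : 0 < α) : IsProbabilityMeasure (paretoMeasure α) :=
  paretoMeasure_eq_paretoMeasure_one α ▸
    ProbabilityTheory.isProbabilityMeasure_paretoMeasure one_pos hα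

lemma paretoMeasure_Ioi (hα : 0 < α) (hc : 1 ≤ c) :
    paretoMeasure α (Ioi c) = ENNReal.ofReal (c ^ (-α)) := by
  have hc0 : 0 < c := one_pos.trans_le hc
  rw [paretoMeasure, withDensity_apply _ measurableSet_Ioi,
    setLIntegral_congr_fun measurableSet_Ioi fun x hx => by rw [if_pos (hc.trans hx.le)],
    ← ofReal_integral_eq_lintegral_ofReal
      ((integrableOn_Ioi_rpow_of_lt (by linarith) hc0).const_mul α)
      (ae_restrict_of_forall_mem measurableSet_Ioi fun x hx => by
        have : 0 < x := hc0.trans hx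
        positivity),
    integral_const_mul, integral_Ioi_rpow_of_lt (by linarith) hc0, sub_add_cancel]
  field_simp

lemma paretoMeasure_Iic (hα : 0 < α) (hc : 1 ≤ c) :
    paretoMeasure α (Iic c) = ENNReal.ofReal (1 - c ^ (-α)) := by
  have := isProbabilityMeasure_paretoMeasure hα
  rw [← compl_Ioi, prob_compl_eq_one_sub measurableSet_Ioi, paretoMeasure_Ioi hα hc,
    ← ENNReal.ofReal_one, ← ENNReal.ofReal_sub _ (by positivity)]

lemma paretoMeasure_Iic_of_lt_one (hc : c < 1) : paretoMeasure α (Iic c) = 0 := by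
  rw [paretoMeasure, withDensity_apply _ measurableSet_Iic,
    setLIntegral_congr_fun measurableSet_Iic fun x (hx : x ≤ c) => by
      rw [if_neg (by linarith), ENNReal.ofReal_zero], lintegral_zero]

lemma paretoMeasure_Iic_div (hα : 0 < α) (hx : 0 < x) (hxa : x ≤ a) :
    paretoMeasure α (Iic (a / x)) = ENNReal.ofReal (1 - x ^ α / a ^ α) := by
  have ha : 0 < a := hx.trans_le hxa
  rw [paretoMeasure_Iic hα ((one_le_div hx).mpr hxa), rpow_neg (div_pos ha hx).le,
    div_rpow ha.le hx.le, inv_div]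

lemma integral_rpow_mul_comp_rpow_div {s : ℝ} (hα : 0 ≤ α) (hs : 0 < s) (hsa : s ≤ a)
    (g : ℝ → ℝ) :
    ∫ x in s..a, α * x ^ (-α - 1) * g (x ^ α / a ^ α) =
      a ^ (-α) * ∫ u in s ^ α / a ^ α..1, g u / u ^ 2 := by
  have ha : 0 < a := hs.trans_le hsa
  have hpos : ∀ x ∈ Ioo (min s a) (max s a), 0 < x := fun x hx => (lt_min hs ha).trans hx.1
  have hsub := intervalIntegral.integral_comp_mul_deriv_of_deriv_nonneg
    (f := fun x => x ^ α / a ^ α) (f' := fun x => α * x ^ (α - 1) / a ^ α)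
    (g := fun u => g u / u ^ 2) (a := s) (b := a)
    ((continuous_id.rpow_const fun _ => Or.inr hα).div_const _).continuousOn
    (fun x hx => (hasDerivAt_rpow_const (Or.inl (hpos x hx).ne')).div_const _)
    (fun x hx => by
      have := hpos x hx
      positivity)
  simp only [Function.comp_def, div_self (rpow_pos_of_pos ha α).ne'] at hsub
  rw [← hsub, ← intervalIntegral.integral_const_mul]
  refine intervalIntegral.integral_congr fun x hx => ?_
  have hx0 : 0 < x := (lt_min hs ha).trans_le hx.1
  have hxα : 0 < x ^ α := rpow_pos_of_pos hx0 α
  rw [rpow_sub hx0, rpow_sub_one hx0.ne', rpow_neg hx0.le, rpow_neg ha.le, rpow_one]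
  field_simp

lemma setLIntegral_Ioc_paretoMeasure_comp {s : ℝ} (hα : 0 < α) (hs : 1 ≤ s) (hsa : s ≤ a)
    {g : ℝ → ℝ} (hg : Continuous g) (hg0 : ∀ u ∈ Icc (s ^ α / a ^ α) 1, 0 ≤ g u) :
    ∫⁻ x in Ioc s a, ENNReal.ofReal (g (x ^ α / a ^ α)) ∂paretoMeasure α =
      ENNReal.ofReal (a ^ (-α) * ∫ u in s ^ α / a ^ α..1, g u / u ^ 2) := by
  have hs0 : 0 < s := one_pos.trans_le hs
  have haα : 0 < a ^ α := rpow_pos_of_pos (hs0.trans_le hsa) α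
  have hmaps : ∀ x ∈ Icc s a, x ^ α / a ^ α ∈ Icc (s ^ α / a ^ α) 1 := fun x hx =>
    ⟨div_le_div_of_nonneg_right (rpow_le_rpow hs0.le hx.1 hα.le) haα.le,
      (div_le_one haα).mpr (rpow_le_rpow (hs0.trans_le hx.1).le hx.2 hα.le)⟩
  have hcont : ContinuousOn (fun x => α * x ^ (-α - 1) * g (x ^ α / a ^ α)) (Icc s a) := by
    have : ∀ x ∈ Icc s a, x ≠ 0 := fun x hx => (hs0.trans_le hx.1).ne'
    fun_prop (disch := assumption)
  have hdens : Measurable fun x : ℝ => ENNReal.ofReal (if 1 ≤ x then α * x ^ (-α - 1) else 0) :=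
    (Measurable.ite measurableSet_Ici (by fun_prop) measurable_const).ennreal_ofReal
  rw [paretoMeasure,
    setLIntegral_withDensity_eq_setLIntegral_mul _ hdens (by fun_prop) measurableSet_Ioc,
    setLIntegral_congr_fun measurableSet_Ioc fun x hx => by
      rw [Pi.mul_apply, if_pos (hs.trans hx.1.le), ← ENNReal.ofReal_mul (by
        have : 0 < x := hs0.trans hx.1
        positivity)],
    ← ofReal_integral_eq_lintegral_ofReal (hcont.integrableOn_Icc.mono_set Ioc_subset_Icc_self)
      (ae_restrict_of_forall_mem measurableSet_Ioc fun x hx => by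
        have : 0 < x := hs0.trans hx.1
        have := hg0 _ (hmaps x (Ioc_subset_Icc_self hx))
        positivity),
    ← intervalIntegral.integral_of_le hsa, integral_rpow_mul_comp_rpow_div hα.le hs0 hsa]

end Pareto

section SoleLeader

def soleLeaderEvent (s a : ℝ) (n : ℕ) (i : Fin n) : Set (Fin n → ℝ) :=
  {ω | s < ω i ∧ (∀ k, s < ω k → k = i) ∧ ∃ j, j ≠ i ∧ a < ω i * ω j}

def soleLeaderSplitEvent (s a : ℝ) (m : ℕ) : Set (ℝ × (Fin m → ℝ)) :=
  {p | s < p.1 ∧ (∀ k, p.2 k ≤ s) ∧ ∃ j, a < p.1 * p.2 j}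

lemma measurableSet_soleLeaderSplitEvent (s a : ℝ) (m : ℕ) :
    MeasurableSet (soleLeaderSplitEvent s a m) := by
  unfold soleLeaderSplitEvent
  measurability

lemma soleLeaderEvent_eq_preimage (s a : ℝ) (m : ℕ) (i : Fin (m + 1)) :
    soleLeaderEvent s a (m + 1) i =
      MeasurableEquiv.piFinSuccAbove (fun _ => ℝ) i ⁻¹' soleLeaderSplitEvent s a m := by
  ext ω
  simp only [soleLeaderEvent, soleLeaderSplitEvent, mem_ofPred_eq, mem_preimage,
    MeasurableEquiv.piFinSuccAbove_apply, Fin.insertNthEquiv_symm_apply, Fin.removeNth]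
  refine and_congr_right fun _ => and_congr ?_ ?_
  · refine ⟨fun h k => not_lt.mp fun hk => Fin.succAbove_ne i k (h _ hk), fun h k hk => ?_⟩
    by_contra hki
    obtain ⟨z, rfl⟩ := Fin.exists_succAbove_eq hki
    exact (h z).not_gt hk
  · exact ⟨fun ⟨j, hj, h⟩ => by obtain ⟨z, rfl⟩ := Fin.exists_succAbove_eq hj; exact ⟨z, h⟩,
      fun ⟨j, h⟩ => ⟨_, Fin.succAbove_ne i j, h⟩⟩

lemma pairwise_disjoint_soleLeaderEvent (s a : ℝ) (n : ℕ) :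
    Pairwise (Function.onFun Disjoint (soleLeaderEvent s a n)) := fun i _ hii' =>
  disjoint_left.mpr fun _ ⟨hi, _⟩ ⟨_, hi', _⟩ => hii' (hi' i hi)

variable {μ : Measure ℝ}

lemma pi_iUnion_soleLeaderEvent [SigmaFinite μ] (s a : ℝ) (m : ℕ) :
    Measure.pi (fun _ : Fin (m + 1) => μ) (⋃ i, soleLeaderEvent s a (m + 1) i) =
      (m + 1) * (μ.prod (Measure.pi fun _ : Fin m => μ)) (soleLeaderSplitEvent s a m) := by
  have hmeas := measurableSet_soleLeaderSplitEvent s a m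
  rw [measure_iUnion (pairwise_disjoint_soleLeaderEvent s a _) fun i => by
      rw [soleLeaderEvent_eq_preimage]
      exact hmeas.preimage (MeasurableEquiv.measurable _)]
  simp_rw [soleLeaderEvent_eq_preimage,
    (measurePreserving_piFinSuccAbove (fun _ => μ) _).measure_preimage hmeas.nullMeasurableSet]
  simp

lemma preimage_mk_soleLeaderSplitEvent {s a x : ℝ} (m : ℕ) (hsx : s < x) (hx : 0 < x) :
    Prod.mk x ⁻¹' soleLeaderSplitEvent s a m =
      (univ.pi fun _ => Iic s) \ univ.pi fun _ => Iic (a / x) := by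
  ext y
  simp only [soleLeaderSplitEvent, mem_preimage, mem_ofPred_eq, Set.mem_sdiff, Set.mem_pi,
    mem_univ, true_implies, mem_Iic, not_forall, not_le, div_lt_iff₀ hx, mul_comm x, hsx, true_and]

lemma prod_soleLeaderSplitEvent [IsFiniteMeasure μ] {s a : ℝ} (m : ℕ) (hs : 0 < s)
    (ha : a ≤ s ^ 2) :
    (μ.prod (Measure.pi fun _ : Fin m => μ)) (soleLeaderSplitEvent s a m) =
      ∫⁻ x in Ioi s, μ (Iic s) ^ m - μ (Iic (a / x)) ^ m ∂μ := by
  rw [Measure.prod_apply (measurableSet_soleLeaderSplitEvent s a m),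
    ← lintegral_indicator measurableSet_Ioi]
  refine lintegral_congr fun x => ?_
  by_cases hsx : s < x
  · have hx : 0 < x := hs.trans hsx
    have hax : a / x ≤ s := by
      rw [div_le_iff₀ hx]
      nlinarith
    rw [indicator_of_mem (show x ∈ Ioi s from hsx), preimage_mk_soleLeaderSplitEvent m hsx hx,
      measure_sdiff (pi_mono fun _ _ => Iic_subset_Iic.mpr hax)
        (MeasurableSet.univ_pi fun _ => measurableSet_Iic).nullMeasurableSet
        (measure_ne_top _ _)]
    simp only [Measure.pi_pi, Finset.prod_const, Finset.card_univ, Fintype.card_fin]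
  · rw [indicator_of_notMem (show x ∉ Ioi s from hsx)]
    convert measure_empty (μ := Measure.pi fun _ : Fin m => μ)
    ext y
    simp [soleLeaderSplitEvent, hsx]

end SoleLeader

noncomputable def oneSubPowDivIntegral (ε : ℝ) (p : ℕ) : ℝ := ∫ u in ε..1, (1 - u) ^ p / u

section OneSubPowDivIntegral

variable {ε t : ℝ}

lemma intervalIntegrable_pow_div {f : ℝ → ℝ} (hf : Continuous f) {x y : ℝ} (hx : 0 < x)
    (hy : 0 < y) (k : ℕ) : IntervalIntegrable (fun u => f u / u ^ k) volume x y :=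
  (hf.continuousOn.div (continuousOn_pow k) fun _ hu =>
    (pow_pos (lt_min hx hy |>.trans_le hu.1) k).ne').intervalIntegrable

lemma intervalIntegrable_oneSubPow_div {x y : ℝ} (hx : 0 < x) (hy : 0 < y) (p : ℕ) :
    IntervalIntegrable (fun u => (1 - u) ^ p / u) volume x y := by
  simpa only [pow_one] using
    intervalIntegrable_pow_div (f := fun u => (1 - u) ^ p) (by fun_prop) hx hy 1

lemma intervalIntegrable_const_div (c : ℝ) {x y : ℝ} (hx : 0 < x) (hy : 0 < y) :
    IntervalIntegrable (fun u => c / u) volume x y := by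
  simpa only [pow_one] using intervalIntegrable_pow_div (f := fun _ => c) continuous_const hx hy 1

lemma integral_const_div_of_pos (c : ℝ) {x y : ℝ} (hx : 0 < x) (hy : 0 < y) :
    ∫ u in x..y, c / u = c * log (y / x) := by
  simp_rw [div_eq_mul_one_div c]
  rw [intervalIntegral.integral_const_mul, integral_one_div (notMem_uIcc_of_lt hx hy)]

lemma mul_log_le_oneSubPowDivIntegral (hε : 0 < ε) (hεt : ε ≤ t) (ht : t ≤ 1) (p : ℕ) :
    (1 - p * t) * log (t / ε) ≤ oneSubPowDivIntegral ε p := by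
  have ht0 : 0 < t := hε.trans_le hεt
  have hhead : ∫ u in ε..t, (1 - p * t) / u ≤ ∫ u in ε..t, (1 - u) ^ p / u := by
    refine intervalIntegral.integral_mono_on hεt
      (intervalIntegrable_const_div _ hε ht0) (intervalIntegrable_oneSubPow_div hε ht0 p)
      fun u hu => ?_
    have hbernoulli : 1 - p * u ≤ (1 - u) ^ p := by
      simpa [sub_eq_add_neg] using one_add_mul_le_pow (a := -u) (by linarith [hu.2]) p
    have : p * u ≤ p * t := mul_le_mul_of_nonneg_left hu.2 p.cast_nonneg
    exact div_le_div_of_nonneg_right (by linarith) (hε.trans_le hu.1).le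
  have htail : 0 ≤ ∫ u in t..1, (1 - u) ^ p / u := intervalIntegral.integral_nonneg ht
    fun u hu => div_nonneg (pow_nonneg (by linarith [hu.2]) _) (ht0.trans_le hu.1).le
  rw [oneSubPowDivIntegral, ← intervalIntegral.integral_add_adjacent_intervals
    (intervalIntegrable_oneSubPow_div hε ht0 p) (intervalIntegrable_oneSubPow_div ht0 one_pos p),
    ← integral_const_div_of_pos _ hε ht0]
  linarith

lemma oneSubPowDivIntegral_le (hε : 0 < ε) (hεt : ε ≤ t) (ht : t ≤ 1) (p : ℕ) :
    oneSubPowDivIntegral ε p ≤ log (t / ε) + (1 - t) ^ p * log (1 / t) := by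
  have ht0 : 0 < t := hε.trans_le hεt
  have hhead : ∫ u in ε..t, (1 - u) ^ p / u ≤ ∫ u in ε..t, 1 / u :=
    intervalIntegral.integral_mono_on hεt (intervalIntegrable_oneSubPow_div hε ht0 p)
      (intervalIntegrable_const_div 1 hε ht0) fun u hu => div_le_div_of_nonneg_right
        (pow_le_one₀ (by linarith [hu.2]) (by linarith [hu.1])) (hε.trans_le hu.1).le
  have htail : ∫ u in t..1, (1 - u) ^ p / u ≤ ∫ u in t..1, (1 - t) ^ p / u :=
    intervalIntegral.integral_mono_on ht (intervalIntegrable_oneSubPow_div ht0 one_pos p)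
      (intervalIntegrable_const_div _ ht0 one_pos) fun u hu => div_le_div_of_nonneg_right
        (pow_le_pow_left₀ (by linarith [hu.2]) (by linarith [hu.1]) p) (ht0.trans_le hu.1).le
  rw [oneSubPowDivIntegral, ← intervalIntegral.integral_add_adjacent_intervals
    (intervalIntegrable_oneSubPow_div hε ht0 p) (intervalIntegrable_oneSubPow_div ht0 one_pos p)]
  rw [integral_const_div_of_pos _ hε ht0, one_mul] at hhead
  rw [integral_const_div_of_pos _ ht0 one_pos] at htail
  linarith

lemma oneSubPowDivIntegral_nonneg (hε : 0 < ε) (hε1 : ε ≤ 1) (p : ℕ) :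
    0 ≤ oneSubPowDivIntegral ε p := by
  simpa using mul_log_le_oneSubPowDivIntegral hε le_rfl hε1 p

lemma integral_sub_pow_div_sq (hε : 0 < ε) {m : ℕ} (hm : m ≠ 0) :
    ∫ u in ε..1, ((1 - ε) ^ m - (1 - u) ^ m) / u ^ 2 =
      m * oneSubPowDivIntegral ε (m - 1) - (1 - ε) ^ m := by
  set C := (1 - ε) ^ m
  have hpos : ∀ u ∈ uIcc ε 1, u ≠ 0 := fun u hu => (lt_min hε one_pos |>.trans_le hu.1).ne'
  have hderiv : ∀ u ∈ uIcc ε 1, HasDerivAt (fun u => ((1 - u) ^ m - C) / u)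
      ((C - (1 - u) ^ m) / u ^ 2 - m * ((1 - u) ^ (m - 1) / u)) u := by
    intro u hu
    refine ((((hasDerivAt_id u).const_sub 1).pow m).sub_const C |>.div (hasDerivAt_id u)
      (hpos u hu)).congr_deriv ?_
    simp only [id, Pi.pow_apply]
    field_simp [hpos u hu]
    ring
  have hint := intervalIntegrable_pow_div (f := fun u => C - (1 - u) ^ m) (by fun_prop) hε
    one_pos 2
  have hint' := intervalIntegrable_oneSubPow_div hε one_pos (m - 1)
  have hftc := intervalIntegral.integral_eq_sub_of_hasDerivAt hderiv
    (hint.sub (hint'.const_mul _))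
  rw [intervalIntegral.integral_sub hint (hint'.const_mul _),
    intervalIntegral.integral_const_mul] at hftc
  simp only [sub_self, zero_pow hm, zero_sub, div_one, zero_div, C] at hftc
  rw [oneSubPowDivIntegral]
  linarith

end OneSubPowDivIntegral

lemma setLIntegral_Ioi_paretoMeasure_soleLeader {α s : ℝ} (hα : 0 < α) (hs : 1 < s) {m : ℕ}
    (hm : m ≠ 0) :
    ∫⁻ x in Ioi s, paretoMeasure α (Iic s) ^ m - paretoMeasure α (Iic (s ^ 2 / x)) ^ m
        ∂paretoMeasure α =
      ENNReal.ofReal (m * (s ^ (-α)) ^ 2 * oneSubPowDivIntegral (s ^ (-α)) (m - 1)) := by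
  have hs0 : 0 < s := one_pos.trans hs
  have hsa : s < s ^ 2 := by nlinarith
  set ε := s ^ (-α) with hε
  have hε0 : 0 < ε := rpow_pos_of_pos hs0 _
  have hε1 : ε ≤ 1 := rpow_le_one_of_one_le_of_nonpos hs.le (by linarith)
  have hεeq : s ^ α / (s ^ 2) ^ α = ε := by
    rw [← rpow_pow_comm hs0.le, hε, rpow_neg hs0.le]
    field_simp [(rpow_pos_of_pos hs0 α).ne']
  have hIic_s : paretoMeasure α (Iic s) ^ m = ENNReal.ofReal ((1 - ε) ^ m) := by
    rw [paretoMeasure_Iic hα hs.le, ENNReal.ofReal_pow (by linarith)]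
  set g : ℝ → ℝ := fun u => (1 - ε) ^ m - (1 - u) ^ m
  have hg0 : ∀ u ∈ Icc ε 1, 0 ≤ g u := fun u hu =>
    sub_nonneg.mpr (pow_le_pow_left₀ (by linarith [hu.2]) (by linarith [hu.1]) m)
  have hIoc : ∀ x ∈ Ioc s (s ^ 2),
      paretoMeasure α (Iic s) ^ m - paretoMeasure α (Iic (s ^ 2 / x)) ^ m =
        ENNReal.ofReal (g (x ^ α / (s ^ 2) ^ α)) := fun x hx => by
    have hx0 : 0 < x := hs0.trans hx.1
    have hu1 : x ^ α / (s ^ 2) ^ α ≤ 1 :=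
      (div_le_one (by positivity)).mpr (rpow_le_rpow hx0.le hx.2 hα.le)
    rw [hIic_s, paretoMeasure_Iic_div hα hx0 hx.2, ← ENNReal.ofReal_pow (by linarith),
      ← ENNReal.ofReal_sub _ (pow_nonneg (by linarith) _)]
  have hIoi : ∀ x ∈ Ioi (s ^ 2),
      paretoMeasure α (Iic s) ^ m - paretoMeasure α (Iic (s ^ 2 / x)) ^ m =
        ENNReal.ofReal ((1 - ε) ^ m) := fun x (hx : s ^ 2 < x) => by
    rw [paretoMeasure_Iic_of_lt_one ((div_lt_one (by linarith)).mpr hx), zero_pow hm, tsub_zero,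
      hIic_s]
  have hInt : 0 ≤ ∫ u in ε..1, g u / u ^ 2 := intervalIntegral.integral_nonneg hε1 fun u hu =>
    div_nonneg (hg0 u hu) (sq_nonneg u)
  rw [← Ioc_union_Ioi_eq_Ioi hsa.le, lintegral_union measurableSet_Ioi Ioc_disjoint_Ioi_same,
    setLIntegral_congr_fun measurableSet_Ioc hIoc, setLIntegral_congr_fun measurableSet_Ioi hIoi,
    setLIntegral_Ioc_paretoMeasure_comp hα hs.le hsa.le (by fun_prop) (hεeq ▸ hg0), hεeq,
    setLIntegral_const, paretoMeasure_Ioi hα (by nlinarith), ← rpow_pow_comm hs0.le (-α) 2, ← hε,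
    ← ENNReal.ofReal_mul (pow_nonneg (by linarith) _),
    ← ENNReal.ofReal_add (by positivity) (by positivity), integral_sub_pow_div_sq hε0 hm]
  ring_nf

lemma pi_paretoMeasure_iUnion_soleLeaderEvent {α s : ℝ} (hα : 0 < α) (hs : 1 < s) {m : ℕ}
    (hm : m ≠ 0) :
    Measure.pi (fun _ : Fin (m + 1) => paretoMeasure α)
        (⋃ i, soleLeaderEvent s (s ^ 2) (m + 1) i) =
      ENNReal.ofReal
        ((m + 1) * (m * (s ^ (-α)) ^ 2 * oneSubPowDivIntegral (s ^ (-α)) (m - 1))) := by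
  have := isProbabilityMeasure_paretoMeasure hα
  rw [pi_iUnion_soleLeaderEvent, prod_soleLeaderSplitEvent m (one_pos.trans hs) le_rfl,
    setLIntegral_Ioi_paretoMeasure_soleLeader hα hs hm,
    ENNReal.ofReal_mul (by positivity : (0 : ℝ) ≤ m + 1)]
  exact_mod_cast congrArg (· * _) (ENNReal.ofReal_natCast (m + 1)).symm

-- `thresholdTail γ n = P(X > √aₙ)` for `X ∼ paretoMeasure α`, whatever `α > 0`.
noncomputable def thresholdTail (γ : ℝ) (n : ℕ) : ℝ := ((n : ℝ) ^ γ * log n) ^ (-(1 / 2) : ℝ)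

section Asymptotics

variable {γ : ℝ} {n : ℕ}

lemma log_thresholdTail (hL : 0 < log n) :
    log (thresholdTail γ n) = -(γ * log n + log (log n)) / 2 := by
  have hn : (0 : ℝ) < n := one_pos.trans ((log_pos_iff n.cast_nonneg).mp hL)
  rw [thresholdTail, log_rpow (by positivity), log_mul (by positivity) hL.ne', log_rpow hn]
  ring

lemma thresholdTail_sq (hL : 0 < log n) :
    thresholdTail γ n ^ 2 = ((n : ℝ) ^ γ * log n)⁻¹ := by
  have hn : (0 : ℝ) < n := one_pos.trans ((log_pos_iff n.cast_nonneg).mp hL)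
  rw [thresholdTail, ← rpow_natCast, ← rpow_mul (by positivity), ← rpow_neg_one]
  norm_num

lemma thresholdTail_pos (hL : 0 < log n) : 0 < thresholdTail γ n := by
  have hn : (0 : ℝ) < n := one_pos.trans ((log_pos_iff n.cast_nonneg).mp hL)
  unfold thresholdTail
  positivity

lemma le_oneSubPowDivIntegral_thresholdTail_div_log (hL : 1 < log n)
    (hLL : log (log n) / log n ≤ γ - 2) :
    (1 - 1 / log n) * (γ / 2 - 1 - log (log n) / log n / 2) ≤
      oneSubPowDivIntegral (thresholdTail γ n) (n - 2) / log n := by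
  set L := log (n : ℝ)
  have hL0 : 0 < L := one_pos.trans hL
  have hn : (1 : ℝ) < n := (log_pos_iff n.cast_nonneg).mp hL0
  set t := 1 / (n * L) with htdef
  have ht0 : 0 < t := by positivity
  have hlogt : log t = -(L + log L) := by
    rw [htdef, one_div, log_inv, log_mul (by positivity) hL0.ne']
  have hεt : thresholdTail γ n ≤ t := by
    rw [← log_le_log_iff (thresholdTail_pos hL0) ht0, log_thresholdTail hL0, hlogt]
    linarith [(div_le_iff₀ hL0).mp hLL]
  have ht1 : t ≤ 1 := by
    rw [htdef, div_le_one (by positivity)]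
    nlinarith
  have hpt : 1 - 1 / L ≤ 1 - ((n - 2 : ℕ) : ℝ) * t := by
    have : ((n - 2 : ℕ) : ℝ) ≤ n := by exact_mod_cast n.sub_le 2
    rw [htdef, sub_le_sub_iff_left, mul_one_div, div_le_div_iff₀ (by positivity) hL0]
    nlinarith
  have hlog : log (t / thresholdTail γ n) = (γ / 2 - 1) * L - log L / 2 := by
    rw [log_div ht0.ne' (thresholdTail_pos hL0).ne', hlogt, log_thresholdTail hL0]
    ring
  have key := mul_log_le_oneSubPowDivIntegral (thresholdTail_pos hL0) hεt ht1 (n - 2)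
  rw [le_div_iff₀ hL0]
  calc (1 - 1 / L) * (γ / 2 - 1 - log L / L / 2) * L
        = (1 - 1 / L) * ((γ / 2 - 1) * L - log L / 2) := by field_simp
    _ ≤ _ := mul_le_mul_of_nonneg_right hpt (by linarith [(div_le_iff₀ hL0).mp hLL])
    _ ≤ _ := hlog ▸ key

lemma oneSubPowDivIntegral_thresholdTail_div_log_le (hγ : 2 ≤ γ) (hn : 4 ≤ n) (hL : 1 < log n) :
    oneSubPowDivIntegral (thresholdTail γ n) (n - 2) / log n ≤
      γ / 2 - 1 + 3 / 2 * (log (log n) / log n) + exp (-log n / 2) := by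
  set L := log (n : ℝ)
  have hL0 : 0 < L := one_pos.trans hL
  have hLL : 0 < log L := log_pos hL
  have hN : (4 : ℝ) ≤ n := by exact_mod_cast hn
  set t := L / n with htdef
  have ht0 : 0 < t := by positivity
  have hlogt : log t = log L - L := by rw [htdef, log_div hL0.ne' (by positivity)]
  have hεt : thresholdTail γ n ≤ t := by
    rw [← log_le_log_iff (thresholdTail_pos hL0) ht0, log_thresholdTail hL0, hlogt]
    nlinarith
  have ht1 : t ≤ 1 := by
    rw [htdef, div_le_one (by positivity)]
    linarith [log_le_sub_one_of_pos (show (0 : ℝ) < n by positivity)]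
  have hdecay : L / 2 ≤ ((n - 2 : ℕ) : ℝ) * t := by
    rw [Nat.cast_sub (by omega), htdef, Nat.cast_ofNat, mul_div_assoc',
      le_div_iff₀ (by positivity)]
    nlinarith
  have hpow : (1 - t) ^ (n - 2) ≤ exp (-L / 2) := calc
    (1 - t) ^ (n - 2) ≤ exp (-t) ^ (n - 2) :=
        pow_le_pow_left₀ (by linarith) (by linarith [add_one_le_exp (-t)]) _
    _ = exp (-(((n - 2 : ℕ) : ℝ) * t)) := by rw [← exp_nat_mul, mul_neg]
    _ ≤ exp (-L / 2) := exp_le_exp.mpr (by linarith)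
  have hlog1t : log (1 / t) ≤ L := by
    rw [one_div, log_inv, hlogt]
    linarith
  have hlog : log (t / thresholdTail γ n) = (γ / 2 - 1) * L + 3 / 2 * log L := by
    rw [log_div ht0.ne' (thresholdTail_pos hL0).ne', hlogt, log_thresholdTail hL0]
    ring
  have key := oneSubPowDivIntegral_le (thresholdTail_pos hL0) hεt ht1 (n - 2)
  rw [div_le_iff₀ hL0]
  calc _ ≤ _ := key
    _ ≤ (γ / 2 - 1) * L + 3 / 2 * log L + exp (-L / 2) * L := by
        rw [hlog]
        gcongr
        exact log_nonneg (one_le_one_div ht0 ht1)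
    _ = _ := by field_simp

lemma tendsto_oneSubPowDivIntegral_thresholdTail_div_log (hγ : 2 < γ) :
    Tendsto (fun n : ℕ => oneSubPowDivIntegral (thresholdTail γ n) (n - 2) / log n) atTop
      (𝓝 (γ / 2 - 1)) := by
  have hlog : Tendsto (fun n : ℕ => log n) atTop atTop :=
    tendsto_log_atTop.comp tendsto_natCast_atTop_atTop
  have hratio : Tendsto (fun n : ℕ => log (log n) / log n) atTop (𝓝 0) :=
    isLittleO_log_id_atTop.tendsto_div_nhds_zero.comp hlog
  have hinv : Tendsto (fun n : ℕ => (log n)⁻¹) atTop (𝓝 0) := hlog.inv_tendsto_atTop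
  have hexp : Tendsto (fun n : ℕ => exp (-log n / 2)) atTop (𝓝 0) :=
    tendsto_exp_atBot.comp ((tendsto_neg_atTop_atBot.comp hlog).atBot_div_const two_pos)
  refine tendsto_of_tendsto_of_tendsto_of_le_of_le' ?_ ?_
    ((hlog.eventually_gt_atTop 1).and (hratio.eventually (gt_mem_nhds (sub_pos.mpr hγ)))
      |>.mono fun n ⟨hL, hLL⟩ => le_oneSubPowDivIntegral_thresholdTail_div_log hL hLL.le)
    ((eventually_ge_atTop 4).and (hlog.eventually_gt_atTop 1) |>.mono fun n ⟨hn, hL⟩ =>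
      oneSubPowDivIntegral_thresholdTail_div_log_le hγ.le hn hL)
  · simpa using ((tendsto_const_nhds (x := (1 : ℝ))).sub hinv).mul
      ((tendsto_const_nhds (x := γ / 2 - 1)).sub (hratio.div_const 2))
  · simpa using ((tendsto_const_nhds (x := γ / 2 - 1)).add (hratio.const_mul (3 / 2))).add hexp

end Asymptotics

lemma sqrt_aSeq_rpow_neg {α γ : ℝ} (hα : 0 < α) {n : ℕ} (hL : 0 < log n) :
    √(aSeq α γ n) ^ (-α) = thresholdTail γ n := by
  have hA : 0 ≤ (n : ℝ) ^ γ * log n := by positivity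
  rw [sqrt_eq_rpow, aSeq, ← rpow_mul hA, ← rpow_mul hA, thresholdTail]
  congr 1
  field_simp

lemma one_lt_sqrt_aSeq {α γ : ℝ} (hα : 0 < α) (hγ : 0 ≤ γ) {n : ℕ} (hL : 1 < log n) :
    1 < √(aSeq α γ n) := by
  have hn : (1 : ℝ) ≤ n := ((log_pos_iff n.cast_nonneg).mp (one_pos.trans hL)).le
  rw [lt_sqrt zero_le_one, one_pow, aSeq]
  exact one_lt_rpow (one_lt_mul_of_le_of_lt (one_le_rpow hn hγ) hL) (by positivity)

lemma setOf_eq_iUnion_soleLeaderEvent (s a : ℝ) (n : ℕ) :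
    {ω : Fin n → ℝ | ∃ i, ω i > s ∧ (∀ k, ω k > s → k = i) ∧ ∃ j, j ≠ i ∧ ω i * ω j > a} =
      ⋃ i, soleLeaderEvent s a n i := by
  ext ω
  simp [soleLeaderEvent]

lemma toReal_pi_paretoMeasure_soleLeader_aSeq {α γ : ℝ} (hα : 0 < α) (hγ : 0 ≤ γ)
    {n : ℕ} (hn : 2 ≤ n) (hL : 1 < log n) :
    (Measure.pi (fun _ : Fin n => paretoMeasure α)
        (⋃ i, soleLeaderEvent √(aSeq α γ n) (aSeq α γ n) n i)).toReal =
      n * ((n - 1) * thresholdTail γ n ^ 2 * oneSubPowDivIntegral (thresholdTail γ n) (n - 2)) := by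
  obtain ⟨m, rfl⟩ : ∃ m, n = m + 1 := ⟨n - 1, by omega⟩
  have hs := one_lt_sqrt_aSeq hα hγ hL
  have hm : m ≠ 0 := by omega
  have key := pi_paretoMeasure_iUnion_soleLeaderEvent hα hs hm
  have hK := oneSubPowDivIntegral_nonneg (rpow_pos_of_pos (one_pos.trans hs) (-α))
    (rpow_le_one_of_one_le_of_nonpos hs.le (by linarith)) (m - 1)
  rw [sq_sqrt (by unfold aSeq; positivity), sqrt_aSeq_rpow_neg hα (one_pos.trans hL)] at key
  rw [sqrt_aSeq_rpow_neg hα (one_pos.trans hL)] at hK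
  rw [key, ENNReal.toReal_ofReal (by positivity), show m + 1 - 2 = m - 1 by omega]
  push_cast
  ring

theorem stmt8 (α γ : ℝ) (hα : 0 < α) (hγ : 2 < γ) :
    Tendsto (fun n : ℕ =>
      ((Measure.pi fun _ : Fin n => paretoMeasure α)
        {ω : Fin n → ℝ | ∃ i, ω i > Real.sqrt (aSeq α γ n) ∧
          (∀ k, ω k > Real.sqrt (aSeq α γ n) → k = i) ∧
          ∃ j, j ≠ i ∧ ω i * ω j > aSeq α γ n}).toReal
      / ((γ/2 - 1) * (n : ℝ) ^ (2 - γ))) atTop (nhds 1) := by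
  have hγ2 : 0 < γ / 2 - 1 := by linarith
  have hlim := ((tendsto_const_nhds (x := (1 : ℝ))).sub tendsto_one_div_atTop_nhds_zero_nat).mul
    ((tendsto_oneSubPowDivIntegral_thresholdTail_div_log hγ).div_const (γ / 2 - 1))
  rw [sub_zero, one_mul, div_self hγ2.ne'] at hlim
  refine hlim.congr' ?_
  filter_upwards [eventually_ge_atTop 2,
    (tendsto_log_atTop.comp tendsto_natCast_atTop_atTop).eventually_gt_atTop 1] with n hn hL
  replace hL : 1 < log (n : ℝ) := hL
  have hn0 : (0 : ℝ) < n := by positivity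
  rw [setOf_eq_iUnion_soleLeaderEvent,
    toReal_pi_paretoMeasure_soleLeader_aSeq hα (by linarith) hn hL,
    thresholdTail_sq (one_pos.trans hL), rpow_sub hn0, rpow_two]
  field_simp
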